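/- Fix θ ∈ Θ. Tests τ1 and τ2 are θ-equivalent (τ1 ⪰_θ τ2 and τ2 ⪰_θ τ1) if and only if either (i) π(τ1|θ') = π(τ2|θ') for all θ', or (ii) θ is minimal on both tests, i.e., π(τi|θ) ≤ π(τi|θ') for all θ' and i = 1,2. -/
import Mathlib


/-- Test `τ` is more `θ`-discerning than `ψ`. -/
def MoreDiscerning {Θ T : Type*} (π : T → Θ → ℝ) (θ : Θ) (τ ψ : T) : Prop :=
  ∃ k0 k1 : ℝ, 0 ≤ k0 ∧ k0 ≤ 1 ∧ 0 ≤ k1 ∧ k1 ≤ 1 ∧ k1 ≥ k0 ∧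
    π τ θ * k1 + (1 - π τ θ) * k0 = π ψ θ ∧
    ∀ θ' : Θ, π τ θ' * k1 + (1 - π τ θ') * k0 ≤ π ψ θ'

/-- two tests are θ-equivalent iff they are equal or θ is minimal on both. -/
theorem stmt6 {Θ T : Type*} (π : T → Θ → ℝ)
    (hπ : ∀ t θ', 0 ≤ π t θ' ∧ π t θ' ≤ 1)
    (θ : Θ) (τ1 τ2 : T) :
    (MoreDiscerning π θ τ1 τ2 ∧ MoreDiscerning π θ τ2 τ1) ↔
      ((∀ θ' : Θ, π τ1 θ' = π τ2 θ') ∨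
       ((∀ θ' : Θ, π τ1 θ ≤ π τ1 θ') ∧ (∀ θ' : Θ, π τ2 θ ≤ π τ2 θ'))) := by
  constructor
  · rintro ⟨⟨k0, k1, hk00, hk01, hk10, hk11, hk, heq1, hle1⟩,
           ⟨l0, l1, hl00, hl01, hl10, hl11, hl, heq2, hle2⟩⟩
    have hd0 : 0 ≤ k1 - k0 := by linarith
    have he0 : 0 ≤ l1 - l0 := by linarith
    have hd1 : k1 - k0 ≤ 1 := by linarith
    have he1 : l1 - l0 ≤ 1 := by linarith
    by_cases hde : (k1 - k0) * (l1 - l0) = 1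
    · -- then k1 - k0 = 1 and l1 - l0 = 1, so k0 = 0, k1 = 1, etc.
      left
      have hd : k1 - k0 = 1 := by nlinarith
      have he : l1 - l0 = 1 := by nlinarith
      have hk0 : k0 = 0 := by linarith
      have hk1 : k1 = 1 := by linarith
      have hl0 : l0 = 0 := by linarith
      have hl1 : l1 = 1 := by linarith
      intro θ'
      have h1 := hle1 θ'
      have h2 := hle2 θ'
      rw [hk0, hk1] at h1
      rw [hl0, hl1] at h2
      nlinarith
    · right
      have hdelt : (k1 - k0) * (l1 - l0) < 1 := by
        rcases lt_or_eq_of_le (mul_le_one₀ hd1 he0 he1) with h | h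
        · exact h
        · exact absurd h hde
      constructor
      · intro θ'
        have h1 := hle1 θ'
        have h2 := hle2 θ'
        nlinarith [mul_nonneg he0 (sub_nonneg.2 h1), mul_nonneg he0 (sub_nonneg.2 h2)]
      · intro θ'
        have h1 := hle1 θ'
        have h2 := hle2 θ'
        nlinarith [mul_nonneg hd0 (sub_nonneg.2 h1), mul_nonneg hd0 (sub_nonneg.2 h2)]
  · rintro (heq | ⟨h1, h2⟩)
    · constructor
      · exact ⟨0, 1, le_refl 0, zero_le_one, zero_le_one, le_refl 1, zero_le_one,
          by rw [heq θ]; ring, fun θ' => by rw [heq θ']; nlinarith⟩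
      · exact ⟨0, 1, le_refl 0, zero_le_one, zero_le_one, le_refl 1, zero_le_one,
          by rw [heq θ]; ring, fun θ' => by rw [heq θ']; nlinarith⟩
    · constructor
      · refine ⟨π τ2 θ, π τ2 θ, (hπ τ2 θ).1, (hπ τ2 θ).2, (hπ τ2 θ).1, (hπ τ2 θ).2,
          le_refl _, by ring, fun θ' => ?_⟩
        have := h2 θ'
        nlinarith
      · refine ⟨π τ1 θ, π τ1 θ, (hπ τ1 θ).1, (hπ τ1 θ).2, (hπ τ1 θ).1, (hπ τ1 θ).2,
          le_refl _, by ring, fun θ' => ?_⟩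
        have := h1 θ'
        nlinarith
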